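/- arXiv:2408.10186 — 7 statements merged into one kernel-verified Lean document; each statement's English description precedes it below -/
import Mathlib

section
/- For every k ∈ {0,…,M−1} and every j ∈ {0,…,M}: if j ∉ {k, k+1} then P_k v_j = v_j; moreover P_k v_k = (1−b₂)·v_k + b₂·v_{k+1} and P_k v_{k+1} = b₁·v_k + (1−b₁)·v_{k+1}. -/
open Matrix

/-- The vector `v_j ∈ ℝ^{M+1}`: the law of `min(j, G)` for `G ~ Geo(q)`. -/
noncomputable def sixV (q : ℝ) (M : ℕ) (j : Fin (M + 1)) : Fin (M + 1) → ℝ :=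
  fun k =>
    if (k : ℕ) < (j : ℕ) then (1 - q) * q ^ (k : ℕ)
    else if (k : ℕ) = (j : ℕ) then q ^ (j : ℕ)
    else 0

/-- The update matrix `P_k`, equal to the identity except in rows/columns `k, k+1`. -/
noncomputable def sixP (b₁ b₂ : ℝ) (M : ℕ) (k : Fin M) :
    Matrix (Fin (M + 1)) (Fin (M + 1)) ℝ :=
  fun i j =>
    if i = k.castSucc ∧ j = k.castSucc then 1 - b₁
    else if i = k.castSucc ∧ j = k.succ then b₂
    else if i = k.succ ∧ j = k.castSucc then b₁
    else if i = k.succ ∧ j = k.succ then 1 - b₂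
    else if i = j then 1 else 0

/-! `P_k` is a rank-one perturbation of the identity: `P_k w = w + (b₂ w_{k+1} - b₁ w_k) (e_k - e_{k+1})`.
Because `q = b₁ / b₂`, every `v_j` with `j ∉ {k, k+1}` satisfies the balance `b₂ v_j(k+1) = b₁ v_j(k)`
(both sides vanish, or are `b₂ (1 - q) q^{k+1}`), so it is fixed. The two remaining identities follow
from `v_{k+1} - v_k = q^{k+1} (e_{k+1} - e_k)`. -/

theorem sixP_eq_one_add_vecMulVec (b₁ b₂ : ℝ) {M : ℕ} (k : Fin M) :
    sixP b₁ b₂ M k = 1 + vecMulVec (Pi.single k.castSucc 1 - Pi.single k.succ 1)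
      (Pi.single k.succ b₂ - Pi.single k.castSucc b₁) := by
  have hne : k.castSucc ≠ k.succ := Fin.castSucc_lt_succ.ne
  ext i j
  simp only [sixP, Matrix.add_apply, one_apply, vecMulVec_apply, Pi.sub_apply, Pi.single_apply]
  by_cases hi : i = k.castSucc <;> by_cases hi' : i = k.succ <;>
    by_cases hj : j = k.castSucc <;> by_cases hj' : j = k.succ <;>
    simp_all [eq_comm] <;> ring

theorem sixP_mulVec (b₁ b₂ : ℝ) {M : ℕ} (k : Fin M) (w : Fin (M + 1) → ℝ) :
    sixP b₁ b₂ M k *ᵥ w =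
      w + (b₂ * w k.succ - b₁ * w k.castSucc) • (Pi.single k.castSucc 1 - Pi.single k.succ 1) := by
  rw [sixP_eq_one_add_vecMulVec, add_mulVec, one_mulVec, vecMulVec_mulVec, op_smul_eq_smul,
    sub_dotProduct, single_dotProduct, single_dotProduct]

theorem sixV_apply_of_lt (q : ℝ) {M : ℕ} {i j : Fin (M + 1)} (h : i < j) :
    sixV q M j i = (1 - q) * q ^ (i : ℕ) := if_pos h

theorem sixV_apply_self (q : ℝ) {M : ℕ} (j : Fin (M + 1)) : sixV q M j j = q ^ (j : ℕ) := by
  simp [sixV]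

theorem sixV_apply_of_gt (q : ℝ) {M : ℕ} {i j : Fin (M + 1)} (h : j < i) : sixV q M j i = 0 := by
  simp [sixV, (Fin.lt_def.mp h).not_gt, (Fin.lt_def.mp h).ne']

theorem sixV_succ_sub_sixV_castSucc (q : ℝ) {M : ℕ} (k : Fin M) :
    sixV q M k.succ - sixV q M k.castSucc =
      q ^ ((k : ℕ) + 1) • (Pi.single k.succ 1 - Pi.single k.castSucc 1) := by
  ext i
  simp only [sixV, Pi.sub_apply, Pi.smul_apply, Pi.single_apply, Fin.ext_iff, Fin.val_castSucc,
    Fin.val_succ, smul_eq_mul]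
  split_ifs <;> simp_all <;> first | omega | ring

theorem sixV_balance {b₁ b₂ q : ℝ} (hq : b₁ = b₂ * q) {M : ℕ} (k : Fin M) {j : Fin (M + 1)}
    (hj₀ : j ≠ k.castSucc) (hj₁ : j ≠ k.succ) :
    b₂ * sixV q M j k.succ = b₁ * sixV q M j k.castSucc := by
  rcases hj₀.lt_or_gt with hlt | hgt
  · rw [sixV_apply_of_gt q hlt, sixV_apply_of_gt q (hlt.trans Fin.castSucc_lt_succ), mul_zero,
      mul_zero]
  · have hgt' : k.succ < j := lt_of_le_of_ne (Fin.castSucc_lt_iff_succ_le.mp hgt) hj₁.symm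
    rw [sixV_apply_of_lt q hgt, sixV_apply_of_lt q hgt', Fin.val_succ, Fin.val_castSucc, hq]
    ring

theorem stmt0_general (b₁ b₂ q : ℝ) (hb₁ : 0 < b₁) (hb₁₂ : b₁ < b₂)
    (hq : q = b₁ / b₂) (M : ℕ) (k : Fin M) :
    (∀ j : Fin (M + 1), j ≠ k.castSucc → j ≠ k.succ →
      (sixP b₁ b₂ M k).mulVec (sixV q M j) = sixV q M j) ∧
    (sixP b₁ b₂ M k).mulVec (sixV q M k.castSucc) =
      (1 - b₂) • sixV q M k.castSucc + b₂ • sixV q M k.succ ∧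
    (sixP b₁ b₂ M k).mulVec (sixV q M k.succ) =
      b₁ • sixV q M k.castSucc + (1 - b₁) • sixV q M k.succ := by
  have hb₁q : b₁ = b₂ * q := by rw [hq, mul_div_cancel₀ _ (hb₁.trans hb₁₂).ne']
  have hstep := eq_add_of_sub_eq (sixV_succ_sub_sixV_castSucc q k)
  refine ⟨fun j hj₀ hj₁ => ?_, ?_, ?_⟩
  · rw [sixP_mulVec, sixV_balance hb₁q k hj₀ hj₁, sub_self, zero_smul, add_zero]
  · rw [sixP_mulVec, sixV_apply_of_gt q Fin.castSucc_lt_succ, sixV_apply_self, Fin.val_castSucc,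
      hstep, hb₁q]
    module
  · rw [sixP_mulVec, sixV_apply_self, sixV_apply_of_lt q Fin.castSucc_lt_succ, Fin.val_succ,
      Fin.val_castSucc, hstep, hb₁q]
    module

theorem stmt0 (b₁ b₂ q : ℝ) (hb₁ : 0 < b₁) (hb₁₂ : b₁ < b₂) (hb₂ : b₂ < 1)
    (hq : q = b₁ / b₂) (M : ℕ) (hM : 1 ≤ M) (k : Fin M) :
    (∀ j : Fin (M + 1), j ≠ k.castSucc → j ≠ k.succ →
      (sixP b₁ b₂ M k).mulVec (sixV q M j) = sixV q M j) ∧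
    (sixP b₁ b₂ M k).mulVec (sixV q M k.castSucc) =
      (1 - b₂) • sixV q M k.castSucc + b₂ • sixV q M k.succ ∧
    (sixP b₁ b₂ M k).mulVec (sixV q M k.succ) =
      b₁ • sixV q M k.castSucc + (1 - b₁) • sixV q M k.succ :=
  stmt0_general b₁ b₂ q hb₁ hb₁₂ hq M k
end

section
/- Assume additionally κμ ≠ ν and set z_c = (√μ − √(κν))/(√(κμ) − √ν). Then at x = x_c^−, the quadratic is a perfect square: Q_{x_c^−}(z) = √κ·(μ + x_c^−)·(z − z_c)² for all real z; i.e., the two critical points z_c^+(x) and z_c^−(x) merge into the double critical point z_c at x = x_c^−. -/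
/-- At `x = x_c⁻`, the quadratic `Q_x(z) = √κ(μ+x)z² − (μ+ν+(κ+1)x)z + √κ(ν+x)` is a
perfect square: the two critical points merge into the double critical point
`z_c = (√μ − √(κν))/(√(κμ) − √ν)`. -/
theorem stmt7 (κ μ ν : ℝ) (hκ : 1 < κ) (hμ : 0 < μ) (hν : 0 < ν) (hne : κ * μ ≠ ν) :
    ∀ z : ℝ,
      Real.sqrt κ * (μ + ((Real.sqrt μ - Real.sqrt (κ * ν)) ^ 2 / (κ - 1) - ν)) * z ^ 2
        - (μ + ν + (κ + 1) * ((Real.sqrt μ - Real.sqrt (κ * ν)) ^ 2 / (κ - 1) - ν)) * z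
        + Real.sqrt κ * (ν + ((Real.sqrt μ - Real.sqrt (κ * ν)) ^ 2 / (κ - 1) - ν)) =
      Real.sqrt κ * (μ + ((Real.sqrt μ - Real.sqrt (κ * ν)) ^ 2 / (κ - 1) - ν)) *
        (z - (Real.sqrt μ - Real.sqrt (κ * ν)) / (Real.sqrt (κ * μ) - Real.sqrt ν)) ^ 2 := by
  intro z
  have hκ0 : (0:ℝ) ≤ κ := by linarith
  set a := Real.sqrt κ with ha
  set m := Real.sqrt μ with hm
  set n := Real.sqrt ν with hn
  have ha2 : a ^ 2 = κ := Real.sq_sqrt hκ0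
  have hm2 : m ^ 2 = μ := Real.sq_sqrt hμ.le
  have hn2 : n ^ 2 = ν := Real.sq_sqrt hν.le
  have hkn : Real.sqrt (κ * ν) = a * n := Real.sqrt_mul hκ0 ν
  have hkm : Real.sqrt (κ * μ) = a * m := Real.sqrt_mul hκ0 μ
  have ha1 : 1 < a := by
    nlinarith [Real.sqrt_nonneg κ]
  have hk1 : κ - 1 ≠ 0 := by linarith
  have hamn : a * m - n ≠ 0 := by
    intro h
    apply hne
    have h' : a * m = n := by linarith
    rw [← ha2, ← hm2, ← hn2, ← h']; ring
  rw [hkn, hkm, ← ha2, ← hm2, ← hn2]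
  have hk1' : a ^ 2 - 1 ≠ 0 := by rw [ha2]; exact hk1
  field_simp
  ring
end

section
/- For every real x with x_c^− < x < x_c^+, one has μ + x > 0 (so Q_x has positive leading coefficient), the quadratic Q_x has two non-real complex-conjugate roots, and each root has modulus √((ν+x)/(μ+x)). -/
/-!
Both roots of `Q_x` are non-real exactly when its discriminant
`(μ + ν + (κ+1)x)² - 4κ(μ+x)(ν+x) = (κ-1)² (x - x_c⁻)(x - x_c⁺)` is negative. The roots of a
real quadratic with negative discriminant form a conjugate pair `w, w̄`, and Vieta's formula
`a w w̄ = c` gives `|w|² = c/a = (ν+x)/(μ+x)`.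
-/

open Complex ComplexConjugate

section RealQuadratic

variable {a b c : ℝ} {w : ℂ}

theorem conj_root_of_real_quadratic (hw : (a : ℂ) * w ^ 2 - b * w + c = 0) :
    (a : ℂ) * conj w ^ 2 - b * conj w + c = 0 := by
  simpa only [map_add, map_sub, map_mul, map_pow, conj_ofReal, map_zero] using
    congrArg conj hw

theorem im_ne_zero_of_real_quadratic_root (hdisc : b ^ 2 < 4 * a * c)
    (hw : (a : ℂ) * w ^ 2 - b * w + c = 0) : w.im ≠ 0 := by
  intro him
  have hreal : a * w.re ^ 2 - b * w.re + c = 0 := by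
    rw [← re_add_im w, him, ofReal_zero, zero_mul, add_zero] at hw
    exact_mod_cast hw
  have hsq : (2 * a * w.re - b) ^ 2 = b ^ 2 - 4 * a * c := by linear_combination 4 * a * hreal
  linarith [hsq ▸ sq_nonneg (2 * a * w.re - b)]

theorem exists_root_of_real_quadratic (ha : a ≠ 0) :
    ∃ w : ℂ, (a : ℂ) * w ^ 2 - b * w + c = 0 := by
  obtain ⟨s, hs⟩ := IsAlgClosed.exists_eq_mul_self (discrim (a : ℂ) (-b) c)
  refine ⟨(b + s) / (2 * a), ?_⟩
  have hroot := (quadratic_eq_zero_iff (ofReal_ne_zero.2 ha) hs _).2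
    (Or.inl (by rw [neg_neg]))
  linear_combination hroot

theorem norm_eq_sqrt_div_of_real_quadratic_root (ha : a ≠ 0) (him : w.im ≠ 0)
    (hw : (a : ℂ) * w ^ 2 - b * w + c = 0) : ‖w‖ = √(c / a) := by
  have hconj := conj_root_of_real_quadratic hw
  have hsub : w - conj w ≠ 0 := by
    rw [sub_conj]
    exact mul_ne_zero (ofReal_ne_zero.2 (mul_ne_zero two_ne_zero him)) I_ne_zero
  have hsum : (a : ℂ) * (w + conj w) = b := by
    have : (w - conj w) * ((a : ℂ) * (w + conj w) - b) = 0 := by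
      linear_combination hw - hconj
    exact sub_eq_zero.1 ((mul_eq_zero.1 this).resolve_left hsub)
  have hprod : ((a * normSq w : ℝ) : ℂ) = c := by
    push_cast
    rw [← mul_conj]
    linear_combination -hw + w * hsum
  rw [norm_def, ← ofReal_inj.1 hprod, mul_div_cancel_left₀ _ ha]

end RealQuadratic

section Meixner

variable {κ μ ν x : ℝ}

theorem meixner_discrim_neg (hκ : 1 < κ) (hμ : 0 ≤ μ) (hν : 0 ≤ ν)
    (hx1 : (√μ - √(κ * ν)) ^ 2 / (κ - 1) - ν < x)
    (hx2 : x < (√μ + √(κ * ν)) ^ 2 / (κ - 1) - ν) :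
    (μ + ν + (κ + 1) * x) ^ 2 < 4 * κ * (μ + x) * (ν + x) := by
  have hκ1 : 0 < κ - 1 := by linarith
  have hsμ : √μ ^ 2 = μ := Real.sq_sqrt hμ
  have hsκν : √(κ * ν) ^ 2 = κ * ν := Real.sq_sqrt (by positivity)
  have h1 : (√μ - √(κ * ν)) ^ 2 < (x + ν) * (κ - 1) := by
    rw [← div_lt_iff₀ hκ1]; linarith
  have h2 : (x + ν) * (κ - 1) < (√μ + √(κ * ν)) ^ 2 := by
    rw [← lt_div_iff₀ hκ1]; linarith
  nlinarith [mul_pos (sub_pos.2 h1) (sub_pos.2 h2)]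

theorem meixner_nu_add_pos (hκ : 1 < κ) (hx1 : (√μ - √(κ * ν)) ^ 2 / (κ - 1) - ν < x) :
    0 < ν + x := by
  have : 0 ≤ (√μ - √(κ * ν)) ^ 2 / (κ - 1) := div_nonneg (sq_nonneg _) (by linarith)
  linarith

end Meixner

/-- For `x_c⁻ < x < x_c⁺`: the leading coefficient of `Q_x` is positive (`μ + x > 0`),
`Q_x` has two non-real complex-conjugate roots, and each root has modulus
`√((ν+x)/(μ+x))`. -/
theorem stmt8 (κ μ ν : ℝ) (hκ : 1 < κ) (hμ : 0 < μ) (hν : 0 < ν) (x : ℝ)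
    (hx1 : (Real.sqrt μ - Real.sqrt (κ * ν)) ^ 2 / (κ - 1) - ν < x)
    (hx2 : x < (Real.sqrt μ + Real.sqrt (κ * ν)) ^ 2 / (κ - 1) - ν) :
    0 < μ + x ∧
    (∃ w : ℂ, (↑(Real.sqrt κ * (μ + x)) : ℂ) * w ^ 2 - (↑(μ + ν + (κ + 1) * x) : ℂ) * w
        + (↑(Real.sqrt κ * (ν + x)) : ℂ) = 0 ∧ w.im ≠ 0) ∧
    ∀ w : ℂ, (↑(Real.sqrt κ * (μ + x)) : ℂ) * w ^ 2 - (↑(μ + ν + (κ + 1) * x) : ℂ) * w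
        + (↑(Real.sqrt κ * (ν + x)) : ℂ) = 0 →
      w.im ≠ 0 ∧
      ((↑(Real.sqrt κ * (μ + x)) : ℂ) * (starRingEnd ℂ w) ^ 2
        - (↑(μ + ν + (κ + 1) * x) : ℂ) * (starRingEnd ℂ w)
        + (↑(Real.sqrt κ * (ν + x)) : ℂ) = 0) ∧
      ‖w‖ = Real.sqrt ((ν + x) / (μ + x)) := by
  have hdisc := meixner_discrim_neg hκ hμ.le hν.le hx1 hx2
  have hνx := meixner_nu_add_pos hκ hx1
  have hμx : 0 < μ + x :=
    pos_of_mul_pos_left (by nlinarith [sq_nonneg (μ + ν + (κ + 1) * x)]) hνx.le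
  have hsκ : 0 < √κ := Real.sqrt_pos.2 (by linarith)
  have hdisc' : (μ + ν + (κ + 1) * x) ^ 2 < 4 * (√κ * (μ + x)) * (√κ * (ν + x)) := by
    have hκsq : √κ * √κ = κ := Real.mul_self_sqrt (by linarith)
    linear_combination hdisc - 4 * (μ + x) * (ν + x) * hκsq
  have ha : √κ * (μ + x) ≠ 0 := (mul_pos hsκ hμx).ne'
  obtain ⟨w₀, hw₀⟩ := exists_root_of_real_quadratic (b := μ + ν + (κ + 1) * x) (c := √κ * (ν + x)) ha
  refine ⟨hμx, ⟨w₀, hw₀, im_ne_zero_of_real_quadratic_root hdisc' hw₀⟩, fun w hw => ?_⟩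
  have him := im_ne_zero_of_real_quadratic_root hdisc' hw
  refine ⟨him, conj_root_of_real_quadratic hw, ?_⟩
  rw [norm_eq_sqrt_div_of_real_quadratic_root ha him hw, mul_div_mul_left _ _ hsκ.ne']
end

section
/- For every z > 0, G is differentiable at z with G′(z) = ((√(κμ) − 1)²/(κ−1)) · (z − ψ)² / (z(z + qκ)(z + q)). In particular ψ is a critical point of G with G′(ψ) = 0 and G″(ψ) = 0. -/
/-!
Differentiating termwise, `G′(z) = μ/(z + qκ) − 1/(z + q) + g(μ)/z`. Over the common denominator
`z(z + qκ)(z + q)` the numerator is a quadratic in `z`; using `(√μ − √κ)² = μ + κ − 2√(κμ)` and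
`(√(κμ))² = κμ`, it is `(√(κμ) − 1)²/(κ − 1)` times the perfect square `(z − ψ)²`. A derivative
with a double zero at `ψ` makes `ψ` a critical point at which the second derivative vanishes too.
-/

open Filter Topology

theorem sqrt_sub_sqrt_sq {a b : ℝ} (ha : 0 ≤ a) (hb : 0 ≤ b) :
    (√a - √b) ^ 2 = a + b - 2 * √(b * a) := by
  rw [sub_sq, Real.sq_sqrt ha, Real.sq_sqrt hb, Real.sqrt_mul hb]
  ring

theorem one_lt_sqrt_mul {κ μ : ℝ} (hκ : 0 < κ) (hμ : κ⁻¹ < μ) : 1 < √(κ * μ) := by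
  rw [Real.lt_sqrt zero_le_one, one_pow, ← inv_lt_iff_one_lt_mul₀' hκ]
  exact hμ

theorem sqrt_mul_lt_self {κ μ : ℝ} (hκ : 0 < κ) (hμ : μ < κ) : √(κ * μ) < κ := by
  rw [Real.sqrt_lt' hκ]
  nlinarith

theorem hasDerivAt_sq_sub_mul {𝕜 : Type*} [NontriviallyNormedField 𝕜] {h : 𝕜 → 𝕜} {a : 𝕜}
    (hh : DifferentiableAt 𝕜 h a) : HasDerivAt (fun x => (x - a) ^ 2 * h x) 0 a := by
  simpa using (((hasDerivAt_id a).sub_const a).fun_pow 2).fun_mul hh.hasDerivAt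

theorem deriv_and_deriv_deriv_eq_zero_of_hasDerivAt_sq_sub_mul {𝕜 : Type*}
    [NontriviallyNormedField 𝕜] {f h : 𝕜 → 𝕜} {a : 𝕜}
    (hf : ∀ᶠ x in 𝓝 a, HasDerivAt f ((x - a) ^ 2 * h x) x)
    (hh : DifferentiableAt 𝕜 h a) : deriv f a = 0 ∧ deriv (deriv f) a = 0 := by
  have hf' : deriv f =ᶠ[𝓝 a] fun x => (x - a) ^ 2 * h x := hf.mono fun x hx => hx.deriv
  refine ⟨by simp [hf'.eq_of_nhds], ?_⟩
  rw [hf'.deriv_eq]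
  exact (hasDerivAt_sq_sub_mul hh).deriv

theorem hasDerivAt_phase {κ q μ g z : ℝ} (hκ : 0 < κ) (hq : 0 ≤ q) (hz : 0 < z) :
    HasDerivAt (fun z => μ * Real.log (κ⁻¹ * z + q) - Real.log (z + q) + g * Real.log z)
      (μ / (z + q * κ) - 1 / (z + q) + g / z) z := by
  have hlin : HasDerivAt (fun x => κ⁻¹ * x + q) κ⁻¹ z := by
    simpa using ((hasDerivAt_id z).const_mul κ⁻¹).add_const q
  refine ((((hlin.log (by positivity)).const_mul μ).fun_sub
    (((hasDerivAt_id z).add_const q).log (by positivity))).fun_add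
    ((Real.hasDerivAt_log hz.ne').const_mul g)).congr_deriv ?_
  have hzq : z + q ≠ 0 := by positivity
  simp only [id]
  field_simp

theorem phase_deriv_factor {κ q μ s z : ℝ} (hs : s ^ 2 = κ * μ) (hκ : κ ≠ 1) (hs1 : s ≠ 1)
    (hz : z ≠ 0) (hzκ : z + q * κ ≠ 0) (hzq : z + q ≠ 0) :
    μ / (z + q * κ) - 1 / (z + q) + (μ + κ - 2 * s) / (κ - 1) / z =
      (s - 1) ^ 2 / (κ - 1) * (z - q * (κ - s) / (s - 1)) ^ 2 / (z * (z + q * κ) * (z + q)) := by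
  have hκ' : κ - 1 ≠ 0 := sub_ne_zero.mpr hκ
  have hs' : s - 1 ≠ 0 := sub_ne_zero.mpr hs1
  field_simp
  linear_combination -(z + q) ^ 2 * hs

theorem stmt10_general (κ q μ : ℝ) (hκ : 1 < κ) (hq0 : 0 < q)
    (hμ1 : κ⁻¹ < μ) (hμ2 : μ < κ) :
    let gμ : ℝ := (Real.sqrt μ - Real.sqrt κ) ^ 2 / (κ - 1)
    let ψ : ℝ := q * (κ - Real.sqrt (κ * μ)) / (Real.sqrt (κ * μ) - 1)
    let G : ℝ → ℝ := fun z =>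
      μ * Real.log (κ⁻¹ * z + q) - Real.log (z + q) + gμ * Real.log z
    (∀ z : ℝ, 0 < z →
      HasDerivAt G
        ((Real.sqrt (κ * μ) - 1) ^ 2 / (κ - 1) * (z - ψ) ^ 2 /
          (z * (z + q * κ) * (z + q))) z) ∧
    deriv G ψ = 0 ∧ deriv (deriv G) ψ = 0 := by
  intro gμ ψ G
  have hκ0 : 0 < κ := one_pos.trans hκ
  have hμ0 : 0 < μ := (inv_pos.mpr hκ0).trans hμ1
  have hs1 : 1 < √(κ * μ) := one_lt_sqrt_mul hκ0 hμ1
  have hψ : 0 < ψ :=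
    div_pos (mul_pos hq0 (sub_pos.mpr (sqrt_mul_lt_self hκ0 hμ2))) (sub_pos.mpr hs1)
  have hg : gμ = (μ + κ - 2 * √(κ * μ)) / (κ - 1) :=
    congrArg (· / (κ - 1)) (sqrt_sub_sqrt_sq hμ0.le hκ0.le)
  have hG' : ∀ z : ℝ, 0 < z → HasDerivAt G ((√(κ * μ) - 1) ^ 2 / (κ - 1) * (z - ψ) ^ 2 /
      (z * (z + q * κ) * (z + q))) z := fun z hz => by
    refine (hasDerivAt_phase hκ0 hq0.le hz).congr_deriv ?_
    rw [hg]
    exact phase_deriv_factor (Real.sq_sqrt (by positivity)) hκ.ne' hs1.ne' hz.ne' (by positivity)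
      (by positivity)
  refine ⟨hG', deriv_and_deriv_deriv_eq_zero_of_hasDerivAt_sq_sub_mul
    (h := fun z => (√(κ * μ) - 1) ^ 2 / (κ - 1) / (z * (z + q * κ) * (z + q))) ?_ ?_⟩
  · filter_upwards [Ioi_mem_nhds hψ] with z hz
    refine (hG' z hz).congr_deriv ?_
    ring
  · fun_prop (disch := positivity)

/-- The steepest-descent phase function
`G(z) = μ log(κ⁻¹z + q) − log(z + q) + g(μ) log z` is differentiable on `(0,∞)` with
`G′(z) = ((√(κμ) − 1)²/(κ−1)) (z − ψ)²/(z(z+qκ)(z+q))`; in particular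
`G′(ψ) = 0` and `G″(ψ) = 0`. -/
theorem stmt10 (κ q μ : ℝ) (hκ : 1 < κ) (hq0 : 0 < q) (hq1 : q < 1)
    (hμ1 : κ⁻¹ < μ) (hμ2 : μ < κ) :
    let gμ : ℝ := (Real.sqrt μ - Real.sqrt κ) ^ 2 / (κ - 1)
    let ψ : ℝ := q * (κ - Real.sqrt (κ * μ)) / (Real.sqrt (κ * μ) - 1)
    let G : ℝ → ℝ := fun z =>
      μ * Real.log (κ⁻¹ * z + q) - Real.log (z + q) + gμ * Real.log z
    (∀ z : ℝ, 0 < z →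
      HasDerivAt G
        ((Real.sqrt (κ * μ) - 1) ^ 2 / (κ - 1) * (z - ψ) ^ 2 /
          (z * (z + q * κ) * (z + q))) z) ∧
    deriv G ψ = 0 ∧ deriv (deriv G) ψ = 0 :=
  stmt10_general κ q μ hκ hq0 hμ1 hμ2
end

section
/- With f_μ = (√(κμ) − 1)^{2/3}·(κ − √(κμ))^{2/3} / ((κ−1)·κ^{1/6}·μ^{1/6}), the third derivative of G at ψ equals G‴(ψ) = 2·(f_μ/ψ)³. -/
/-!
Differentiating each logarithm of an affine function separately gives
`G‴(z) = 2 (μ κ⁻³ / (κ⁻¹ z + q)³ - 1 / (z + q)³ + g(μ) / z³)`.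
With `s = √(κμ)` one has `μ = s² / κ`, `g(μ) = (κ - s)² / (κ (κ - 1))`,
`ψ + q = q (κ - 1) / (s - 1)`, `κ⁻¹ ψ + q = q s (κ - 1) / (κ (s - 1))` and
`f_μ³ = (s - 1)² (κ - s)² / ((κ - 1)³ s)`, so the claim becomes a rational identity in `s, κ, q`.
-/

open Real
open scoped Nat

-- Valid also at the pole `a * z + b = 0`, where both sides vanish since `deriv log 0 = 0 = 0⁻¹`.
lemma deriv_log_affine (a b : ℝ) :
    deriv (fun z => log (a * z + b)) = fun z => a * (a * z + b)⁻¹ := by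
  funext z
  rw [deriv_comp_mul_left a (fun w => log (w + b)), deriv_comp_add_const, deriv_log, smul_eq_mul]

lemma iteratedDeriv_succ_log_affine (n : ℕ) (a b x : ℝ) :
    iteratedDeriv (n + 1) (fun z => log (a * z + b)) x =
      (-1) ^ n * n ! * a ^ (n + 1) * (a * x + b) ^ (-1 - n : ℤ) := by
  rw [iteratedDeriv_succ', deriv_log_affine, iteratedDeriv_const_mul_field,
    iteratedDeriv_eq_iterate, iter_deriv_inv_linear]
  ring

lemma iteratedDeriv_three_phase {a q μ g z : ℝ} (h₁ : a * z + q ≠ 0) (h₂ : z + q ≠ 0)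
    (hz : z ≠ 0) :
    iteratedDeriv 3 (fun z => μ * log (a * z + q) - log (z + q) + g * log z) z =
      2 * (μ * a ^ 3 / (a * z + q) ^ 3 - 1 / (z + q) ^ 3 + g / z ^ 3) := by
  have hA : ContDiffAt ℝ 3 (fun z => μ * log (a * z + q)) z := by fun_prop (disch := assumption)
  have hB : ContDiffAt ℝ 3 (fun z => log (z + q)) z := by fun_prop (disch := assumption)
  have hC : ContDiffAt ℝ 3 (fun z => g * log z) z := by fun_prop (disch := assumption)
  rw [iteratedDeriv_fun_add (hA.sub hB) hC, iteratedDeriv_fun_sub hA hB,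
    iteratedDeriv_const_mul_field, iteratedDeriv_const_mul_field]
  have hlogA := iteratedDeriv_succ_log_affine 2 a q z
  have hlogB := iteratedDeriv_succ_log_affine 2 1 q z
  have hlogC := iteratedDeriv_succ_log_affine 2 1 0 z
  simp only [one_mul, add_zero] at hlogB hlogC
  rw [hlogA, hlogB, hlogC]
  norm_num
  ring

lemma deriv_deriv_deriv_eq_iteratedDeriv_three {𝕜 F : Type*} [NontriviallyNormedField 𝕜]
    [NormedAddCommGroup F] [NormedSpace 𝕜 F] (f : 𝕜 → F) :
    deriv (deriv (deriv f)) = iteratedDeriv 3 f := by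
  simp [iteratedDeriv_eq_iterate]

lemma sqrt_sub_sqrt_sq_eq {κ μ : ℝ} (hκ : 0 < κ) :
    (√μ - √κ) ^ 2 = (κ - √(κ * μ)) ^ 2 / κ := by
  rw [sqrt_mul hκ.le, eq_div_iff hκ.ne']
  linear_combination (κ - √μ ^ 2) * sq_sqrt hκ.le

lemma sqrt_mul_mem_Ioo {κ μ : ℝ} (hκ : 0 < κ) (hμ₁ : κ⁻¹ < μ) (hμ₂ : μ < κ) :
    √(κ * μ) ∈ Set.Ioo 1 κ := by
  constructor
  · rw [lt_sqrt zero_le_one, one_pow, ← inv_mul_lt_iff₀ hκ, mul_one]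
    exact hμ₁
  · rw [sqrt_lt' hκ, sq]
    exact mul_lt_mul_of_pos_left hμ₂ hκ

lemma rpow_two_thirds_mul_div_pow_three {a b c κ μ : ℝ} (ha : 0 ≤ a) (hb : 0 ≤ b) (hκ : 0 ≤ κ)
    (hμ : 0 ≤ μ) :
    (a ^ ((2 : ℝ) / 3) * b ^ ((2 : ℝ) / 3) / (c * κ ^ ((1 : ℝ) / 6) * μ ^ ((1 : ℝ) / 6))) ^ 3 =
      a ^ 2 * b ^ 2 / (c ^ 3 * √(κ * μ)) := by
  have cube : ∀ {x : ℝ} (y : ℝ), 0 ≤ x → (x ^ y) ^ 3 = x ^ (y * 3) := fun y hx =>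
    mod_cast (rpow_mul_natCast hx y 3).symm
  rw [div_pow, mul_pow, mul_pow, mul_pow, cube _ ha, cube _ hb, cube _ hκ, cube _ hμ, mul_assoc,
    ← mul_rpow hκ hμ, sqrt_eq_rpow]
  norm_num

lemma critical_point_identity {κ q μ s ψ : ℝ} (hκ : κ ≠ 0) (hs : s ≠ 0) (hs1 : s - 1 ≠ 0)
    (hκs : κ - s ≠ 0) (hμ : μ = s ^ 2 / κ) (hψ : ψ = q * (κ - s) / (s - 1)) :
    μ * κ⁻¹ ^ 3 / (κ⁻¹ * ψ + q) ^ 3 - 1 / (ψ + q) ^ 3 + (κ - s) ^ 2 / κ / (κ - 1) / ψ ^ 3 =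
      (s - 1) ^ 2 * (κ - s) ^ 2 / ((κ - 1) ^ 3 * s) / ψ ^ 3 := by
  have hA : κ⁻¹ * ψ + q = q * s * (κ - 1) / (κ * (s - 1)) := by
    rw [hψ]; field_simp; ring
  have hB : ψ + q = q * (κ - 1) / (s - 1) := by
    rw [hψ]; field_simp; ring
  rw [hA, hB, hψ, hμ]
  field_simp
  ring

theorem stmt11_general (κ q μ : ℝ) (hκ : 1 < κ) (hq0 : 0 < q)
    (hμ1 : κ⁻¹ < μ) (hμ2 : μ < κ) :
    let gμ : ℝ := (Real.sqrt μ - Real.sqrt κ) ^ 2 / (κ - 1)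
    let ψ : ℝ := q * (κ - Real.sqrt (κ * μ)) / (Real.sqrt (κ * μ) - 1)
    let G : ℝ → ℝ := fun z =>
      μ * Real.log (κ⁻¹ * z + q) - Real.log (z + q) + gμ * Real.log z
    let fμ : ℝ := (Real.sqrt (κ * μ) - 1) ^ ((2 : ℝ) / 3) *
      (κ - Real.sqrt (κ * μ)) ^ ((2 : ℝ) / 3) /
      ((κ - 1) * κ ^ ((1 : ℝ) / 6) * μ ^ ((1 : ℝ) / 6))
    deriv (deriv (deriv G)) ψ = 2 * (fμ / ψ) ^ 3 := by
  intro gμ ψ G fμ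
  have hκ0 : 0 < κ := by linarith
  have hμ0 : 0 < μ := (inv_pos.2 hκ0).trans hμ1
  obtain ⟨hs1, hsκ⟩ := sqrt_mul_mem_Ioo hκ0 hμ1 hμ2
  have hψ : 0 < ψ := div_pos (mul_pos hq0 (sub_pos.2 hsκ)) (sub_pos.2 hs1)
  have hf : fμ ^ 3 = _ :=
    rpow_two_thirds_mul_div_pow_three (sub_pos.2 hs1).le (sub_pos.2 hsκ).le hκ0.le hμ0.le
  have hg : gμ = _ / (κ - 1) := congrArg (· / (κ - 1)) (sqrt_sub_sqrt_sq_eq hκ0)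
  have hμ : μ = √(κ * μ) ^ 2 / κ := by
    rw [sq_sqrt (by positivity), mul_div_cancel_left₀ _ hκ0.ne']
  rw [deriv_deriv_deriv_eq_iteratedDeriv_three,
    iteratedDeriv_three_phase (by positivity) (by positivity) hψ.ne', div_pow fμ, hf, hg]
  congr 1
  exact critical_point_identity hκ0.ne' (by linarith) (by linarith) (by linarith) hμ rfl

/-- The third derivative of the phase function at the double critical point:
`G‴(ψ) = 2 (f_μ/ψ)³`, where `f_μ` is the Tracy–Widom scaling factor. -/
theorem stmt11 (κ q μ : ℝ) (hκ : 1 < κ) (hq0 : 0 < q) (hq1 : q < 1)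
    (hμ1 : κ⁻¹ < μ) (hμ2 : μ < κ) :
    let gμ : ℝ := (Real.sqrt μ - Real.sqrt κ) ^ 2 / (κ - 1)
    let ψ : ℝ := q * (κ - Real.sqrt (κ * μ)) / (Real.sqrt (κ * μ) - 1)
    let G : ℝ → ℝ := fun z =>
      μ * Real.log (κ⁻¹ * z + q) - Real.log (z + q) + gμ * Real.log z
    let fμ : ℝ := (Real.sqrt (κ * μ) - 1) ^ ((2 : ℝ) / 3) *
      (κ - Real.sqrt (κ * μ)) ^ ((2 : ℝ) / 3) /
      ((κ - 1) * κ ^ ((1 : ℝ) / 6) * μ ^ ((1 : ℝ) / 6))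
    deriv (deriv (deriv G)) ψ = 2 * (fμ / ψ) ^ 3 :=
  stmt11_general κ q μ hκ hq0 hμ1 hμ2
end

section
/- For every ε > 0 there exists D = D(ε, β, α, c, κ) such that for every S₀ ≥ D all of the following hold: (i) the series Σ_{m≥0} S_m^{−γ} converges and its sum is at most ε/9; (ii) the series Σ_{m≥0} c^{−1}·exp(−c·T_m^α) converges and its sum is less than ε/2; (iii) κ·T_m/S_m < ε/9 for every m ≥ 0. -/
open Real Filter Finset


/-- Bernoulli-type: for `q > 0` and `x ≥ 1`, `1 + q(x-1)/x ≤ x^q`. -/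
lemma my_bern {q x : ℝ} (hq : 0 < q) (hx : 1 ≤ x) : 1 + q * (x - 1) / x ≤ x ^ q := by
  have hx0 : (0:ℝ) < x := lt_of_lt_of_le one_pos hx
  rcases le_or_gt q 1 with h1 | h1
  · have hs : (-1:ℝ) ≤ 1 / x - 1 := by
      have : 0 < 1 / x := by positivity
      linarith
    have h2 := rpow_one_add_le_one_add_mul_self hs hq.le h1
    rw [show (1:ℝ) + (1 / x - 1) = x⁻¹ by ring, Real.inv_rpow hx0.le] at h2
    have hxq : 0 < x ^ q := Real.rpow_pos_of_pos hx0 q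
    have key : (x ^ q)⁻¹ ≤ 1 - q * (x - 1) / x := by
      have e : 1 + q * (1 / x - 1) = 1 - q * (x - 1) / x := by field_simp; ring
      linarith [e ▸ h2]
    have h3 : 1 ≤ x ^ q * (1 - q * (x - 1) / x) := by
      have h4 := mul_le_mul_of_nonneg_left key hxq.le
      rw [mul_inv_cancel₀ hxq.ne'] at h4
      exact h4
    have hu0 : 0 ≤ q * (x - 1) / x := div_nonneg (mul_nonneg hq.le (by linarith)) hx0.le
    have h1u : 0 < 1 - q * (x - 1) / x := by
      rcases mul_pos_iff.1 (lt_of_lt_of_le one_pos h3) with ⟨_, h⟩ | ⟨h, _⟩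
      · exact h
      · linarith
    nlinarith [h3, sq_nonneg (q * (x - 1) / x), h1u]
  · have h2 := one_add_mul_self_le_rpow_one_add (s := x - 1) (by linarith) h1.le
    rw [show (1:ℝ) + (x - 1) = x by ring] at h2
    have : q * (x - 1) / x ≤ q * (x - 1) := by
      apply div_le_self (by nlinarith) hx
    linarith

/-- Tangent line estimate for negative powers. -/
lemma my_tangent_neg {p a b : ℝ} (hp : 1 < p) (ha : 0 < a) (hab : a ≤ b) :
    (p - 1) * (b - a) * b ^ (-p) ≤ a ^ (-(p-1)) - b ^ (-(p-1)) := by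
  have hb : 0 < b := ha.trans_le hab
  have hx : 1 ≤ b / a := (one_le_div ha).2 hab
  have h := my_bern (q := p - 1) (by linarith) hx
  rw [Real.div_rpow hb.le ha.le] at h
  set u := a ^ (p-1) with hu
  set v := b ^ (p-1) with hv
  have hup : 0 < u := Real.rpow_pos_of_pos ha _
  have hvp : 0 < v := Real.rpow_pos_of_pos hb _
  have e2 : (p-1) * (b / a - 1) / (b / a) = (p-1) * (b - a) / b := by
    field_simp
  rw [e2] at h
  have hmul : u * (1 + (p-1) * (b - a) / b) ≤ v := by
    have := mul_le_mul_of_nonneg_left h hup.le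
    calc u * (1 + (p-1)*(b-a)/b) ≤ u * (v / u) := this
    _ = v := by field_simp
  have hbp : b ^ (-p) = v⁻¹ * b⁻¹ := by
    rw [show -p = -(p-1) + -1 by ring, Real.rpow_add hb, Real.rpow_neg hb.le,
      Real.rpow_neg_one]
  have hanegp : a ^ (-(p-1)) = u⁻¹ := Real.rpow_neg ha.le _
  have hbnegp : b ^ (-(p-1)) = v⁻¹ := Real.rpow_neg hb.le _
  rw [hbp, hanegp, hbnegp]
  have e : u⁻¹ - v⁻¹ = (v - u) * (u⁻¹ * v⁻¹) := by field_simp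
  rw [e]
  have h2 : (p-1)*(b-a)/b * u ≤ v - u := by nlinarith
  have e3 : (p-1)*(b-a)*(v⁻¹*b⁻¹) = ((p-1)*(b-a)/b*u)*(u⁻¹*v⁻¹) := by field_simp
  rw [e3]
  exact mul_le_mul_of_nonneg_right h2 (by positivity)

/-- Tangent line estimate for concave powers: for `0 ≤ β < 1`, `0 < a ≤ b`,
`(1-β)(b-a) b^{-β} ≤ b^{1-β} - a^{1-β}`. -/
lemma my_tangent_pos {β a b : ℝ} (hβ0 : 0 ≤ β) (hβ1 : β < 1) (ha : 0 < a) (hab : a ≤ b) :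
    (1 - β) * (b - a) * b ^ (-β) ≤ b ^ (1-β) - a ^ (1-β) := by
  have hb : 0 < b := ha.trans_le hab
  have hs : (-1:ℝ) ≤ a / b - 1 := by
    have : 0 < a / b := by positivity
    linarith
  have h := rpow_one_add_le_one_add_mul_self hs (by linarith : (0:ℝ) ≤ 1 - β) (by linarith)
  rw [show (1:ℝ) + (a / b - 1) = a / b by ring, Real.div_rpow ha.le hb.le] at h
  -- h : a^(1-β)/b^(1-β) ≤ 1 + (1-β)*(a/b - 1)
  have hbp : 0 < b ^ (1-β) := Real.rpow_pos_of_pos hb _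
  have hmul : a ^ (1-β) ≤ b ^ (1-β) * (1 + (1-β) * (a/b - 1)) := by
    have := mul_le_mul_of_nonneg_left h hbp.le
    calc a ^ (1-β) = b ^ (1-β) * (a ^ (1-β) / b ^ (1-β)) := by field_simp
    _ ≤ b ^ (1-β) * (1 + (1-β)*(a/b-1)) := this
  have hbb : b ^ (1-β) * (a/b - 1) = (a - b) * b ^ (-β) := by
    rw [show -β = (1-β) + -1 by ring, Real.rpow_add hb, Real.rpow_neg_one]
    field_simp
  nlinarith [hmul, hbb]

/-- Partial sum bound for `Σ (A+δm)^{-p}`. -/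
lemma my_partial_sum {p A δ : ℝ} (hp : 1 < p) (hA : 0 < A) (hδ : 0 < δ) (n : ℕ) :
    ∑ m ∈ Finset.range n, (A + δ * m) ^ (-p) ≤ A ^ (-p) + A ^ (-(p-1)) / (δ * (p-1)) := by
  have hD : 0 < δ * (p - 1) := mul_pos hδ (by linarith)
  have claim : ∀ k : ℕ, ∑ m ∈ Finset.range (k+1), (A + δ * m) ^ (-p)
      ≤ A ^ (-p) + (A ^ (-(p-1)) - (A + δ * k) ^ (-(p-1))) / (δ * (p-1)) := by
    intro k
    induction k with
    | zero =>
      rw [zero_add, Finset.sum_range_one]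
      norm_num
    | succ k ih =>
      rw [Finset.sum_range_succ]
      have hak : 0 < A + δ * (k:ℝ) := by positivity
      have hab : A + δ * (k:ℝ) ≤ A + δ * ((k:ℕ)+1 : ℕ) := by push_cast; nlinarith
      have ht := my_tangent_neg hp hak hab
      have hd : (A + δ * ((k:ℕ)+1 : ℕ) : ℝ) - (A + δ * (k:ℝ)) = δ := by push_cast; ring
      rw [hd] at ht
      have hterm : (A + δ * ((k:ℕ)+1 : ℕ) : ℝ) ^ (-p)
          ≤ ((A + δ * (k:ℝ)) ^ (-(p-1)) - (A + δ * ((k:ℕ)+1 : ℕ) : ℝ) ^ (-(p-1))) / (δ * (p-1)) := by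
        rw [le_div_iff₀ hD]
        calc (A + δ * ((k:ℕ)+1 : ℕ) : ℝ) ^ (-p) * (δ * (p-1))
            = (p-1) * δ * (A + δ * ((k:ℕ)+1 : ℕ) : ℝ) ^ (-p) := by ring
          _ ≤ _ := ht
      have hring : ∀ x y z : ℝ, (x - y) / (δ * (p-1)) + (y - z) / (δ * (p-1))
          = (x - z) / (δ * (p-1)) := by intro x y z; ring
      have := hring (A ^ (-(p-1))) ((A + δ * (k:ℝ)) ^ (-(p-1)))
        ((A + δ * ((k:ℕ)+1 : ℕ) : ℝ) ^ (-(p-1)))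
      linarith [ih, hterm]
  cases n with
  | zero =>
    simp only [Finset.range_zero, Finset.sum_empty]
    have h1 : 0 ≤ A ^ (-p) := Real.rpow_nonneg hA.le _
    have h2 : 0 ≤ A ^ (-(p-1)) / (δ * (p-1)) :=
      div_nonneg (Real.rpow_nonneg hA.le _) hD.le
    linarith
  | succ k =>
    refine (claim k).trans ?_
    have h2 : 0 ≤ (A + δ * k) ^ (-(p-1)) := Real.rpow_nonneg (by positivity) _
    have h3 : (A ^ (-(p-1)) - (A + δ * k) ^ (-(p-1))) / (δ * (p-1))
        ≤ A ^ (-(p-1)) / (δ * (p-1)) := (div_le_div_iff_of_pos_right hD).2 (by linarith)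
    linarith

set_option maxHeartbeats 2000000 in
/-- Summability estimates along the time-step sequence `S_{m+1} = S_m + S_m^β`,
`T_m = S_m^β`, with `γ = 5/6 − β/2 − α`: for every `ε > 0` there is `D` such that for
every `S₀ ≥ D`, (i) `Σ S_m^{−γ} ≤ ε/9`, (ii) `Σ c⁻¹ exp(−c T_m^α) < ε/2`, and
(iii) `κ T_m / S_m < ε/9` for all `m`. -/
theorem stmt14 (β α c κ : ℝ) (hβ1 : 2 / 3 < β) (hβ2 : β < 1) (hα0 : 0 < α)
    (hα1 : α < β / 2 - 1 / 3) (hc : 0 < c) (hκ : 1 < κ) (ε : ℝ) (hε : 0 < ε) :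
    ∃ D : ℝ, 2 ≤ D ∧ ∀ S₀ : ℝ, D ≤ S₀ →
      ∀ S : ℕ → ℝ, S 0 = S₀ → (∀ m : ℕ, S (m + 1) = S m + S m ^ β) →
        (Summable (fun m : ℕ => S m ^ (-(5 / 6 - β / 2 - α))) ∧
          ∑' m : ℕ, S m ^ (-(5 / 6 - β / 2 - α)) ≤ ε / 9) ∧
        (Summable (fun m : ℕ => c⁻¹ * Real.exp (-c * (S m ^ β) ^ α)) ∧
          ∑' m : ℕ, c⁻¹ * Real.exp (-c * (S m ^ β) ^ α) < ε / 2) ∧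
        ∀ m : ℕ, κ * (S m ^ β) / S m < ε / 9 := by
  have hβ0 : 0 < β := by linarith
  set γ : ℝ := 5 / 6 - β / 2 - α with hγdef
  set q : ℝ := 1 - β with hqdef
  have hq0 : 0 < q := by rw [hqdef]; linarith
  have hγq : q < γ := by rw [hqdef, hγdef]; linarith
  have hγ0 : 0 < γ := lt_trans hq0 hγq
  set δ : ℝ := q / 2 with hδdef
  have hδ0 : 0 < δ := by rw [hδdef]; linarith
  set p₁ : ℝ := γ / q with hp₁def
  have hp₁ : 1 < p₁ := (one_lt_div hq0).2 hγq
  have hqp₁ : q * p₁ = γ := by rw [hp₁def]; field_simp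
  set p₂ : ℝ := 2 / q with hp₂def
  have hp₂ : 1 < p₂ := by rw [hp₂def, lt_div_iff₀ hq0]; rw [hqdef]; linarith
  have hqp₂ : q * p₂ = 2 := by rw [hp₂def]; field_simp
  have hβα : 0 < β * α := mul_pos hβ0 hα0
  obtain ⟨n, hn⟩ := exists_nat_ge (2 / (β * α))
  have hn2 : 2 ≤ (n : ℝ) * (β * α) := by
    rw [div_le_iff₀ hβα] at hn; linarith
  set C₂ : ℝ := c⁻¹ * (n.factorial : ℝ) / c ^ n with hC₂def
  have hC₂0 : 0 < C₂ := by
    rw [hC₂def]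
    have : (0:ℝ) < (n.factorial : ℝ) := by positivity
    positivity
  clear_value γ q δ p₁ p₂ C₂
  -- eventual bounds
  have hT : Tendsto (fun D : ℝ => D ^ q) atTop atTop := tendsto_rpow_atTop hq0
  have tends : ∀ r : ℝ, 0 < r →
      Tendsto (fun D : ℝ => (D ^ q) ^ (-r)) atTop (nhds 0) :=
    fun r hr => (tendsto_rpow_neg_atTop hr).comp hT
  have h1 : Tendsto (fun D : ℝ =>
      (D^q)^(-p₁) + (D^q)^(-(p₁-1))/(δ*(p₁-1))) atTop (nhds 0) := by
    have := (tends p₁ (by linarith)).add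
      ((tends (p₁-1) (by linarith)).div_const (δ*(p₁-1)))
    simpa using this
  have h2 : Tendsto (fun D : ℝ =>
      C₂ * ((D^q)^(-p₂) + (D^q)^(-(p₂-1))/(δ*(p₂-1)))) atTop (nhds 0) := by
    have := ((tends p₂ (by linarith)).add
      ((tends (p₂-1) (by linarith)).div_const (δ*(p₂-1)))).const_mul C₂
    simpa using this
  have h3 : Tendsto (fun D : ℝ => κ * D ^ (-q)) atTop (nhds 0) := by
    have := (tendsto_rpow_neg_atTop hq0).const_mul κ
    simpa using this
  have hev := (h1.eventually_lt_const (by positivity : (0:ℝ) < ε/9)).and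
    ((h2.eventually_lt_const (by positivity : (0:ℝ) < ε/2)).and
      (h3.eventually_lt_const (by positivity : (0:ℝ) < ε/9)))
  obtain ⟨a, ha⟩ := eventually_atTop.1 hev
  refine ⟨max a 2, le_max_right _ _, ?_⟩
  intro S₀ hS₀ S hS0 hrec
  obtain ⟨hE1, hE2, hE3⟩ := ha S₀ (le_trans (le_max_left _ _) hS₀)
  have hS₀2 : (2:ℝ) ≤ S₀ := le_trans (le_max_right _ _) hS₀
  have hS₀0 : (0:ℝ) < S₀ := by linarith
  have hApos : 0 < S₀ ^ q := Real.rpow_pos_of_pos hS₀0 q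
  -- growth facts
  have h2le : ∀ m, 2 ≤ S m := by
    intro m; induction m with
    | zero => rw [hS0]; exact hS₀2
    | succ k ih =>
      rw [hrec k]
      have : 0 ≤ S k ^ β := Real.rpow_nonneg (by linarith) β
      linarith
  have hSpos : ∀ m, 0 < S m := fun m => by linarith [h2le m]
  have hS1 : ∀ m, 1 ≤ S m := fun m => by linarith [h2le m]
  have hmono : ∀ m, S₀ ≤ S m := by
    intro m; induction m with
    | zero => rw [hS0]
    | succ k ih =>
      rw [hrec k]
      have : 0 ≤ S k ^ β := Real.rpow_nonneg (hSpos k).le β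
      linarith
  -- key lower bound
  have hkey : ∀ m : ℕ, S₀ ^ q + δ * m ≤ S m ^ q := by
    intro m; induction m with
    | zero => simp [hS0]
    | succ k ih =>
      have hrpownn : 0 ≤ S k ^ β := Real.rpow_nonneg (hSpos k).le β
      have hb : 0 < S k + S k ^ β := by linarith [hSpos k]
      have hab : S k ≤ S k + S k ^ β := by linarith
      have ht := my_tangent_pos hβ0.le hβ2 (hSpos k) hab
      rw [add_sub_cancel_left] at ht
      have hle2 : S k + S k ^ β ≤ 2 * S k := by
        have h' : S k ^ β ≤ S k := by
          have := Real.rpow_le_rpow_of_exponent_le (hS1 k) hβ2.le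
          rwa [Real.rpow_one] at this
        linarith
      have hbneg : (2 * S k) ^ (-β) ≤ (S k + S k ^ β) ^ (-β) :=
        Real.rpow_le_rpow_of_nonpos hb hle2 (by linarith)
      have h2S : (2 * S k) ^ (-β) = 2 ^ (-β) * S k ^ (-β) :=
        Real.mul_rpow (by norm_num) (hSpos k).le
      have h2b : (1:ℝ)/2 ≤ 2 ^ (-β) := by
        have h := Real.rpow_le_rpow_of_exponent_le (one_le_two) (by linarith : -(1:ℝ) ≤ -β)
        rw [Real.rpow_neg_one] at h
        linarith [h]
      have hcancel : S k ^ β * S k ^ (-β) = 1 := by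
        rw [← Real.rpow_add (hSpos k)]; simp
      have hbnegnn : 0 ≤ (2 * S k) ^ (-β) := Real.rpow_nonneg (by linarith [hSpos k]) _
      have hge : δ ≤ (1-β) * (S k ^ β) * (S k + S k ^ β) ^ (-β) := by
        have c1 : (1-β) * (S k ^ β) * (2 * S k) ^ (-β)
            ≤ (1-β) * (S k ^ β) * (S k + S k ^ β) ^ (-β) := by
          apply mul_le_mul_of_nonneg_left hbneg
          exact mul_nonneg (by linarith) hrpownn
        have c2 : (1-β) * (S k ^ β) * (2 * S k) ^ (-β)
            = (1-β) * 2 ^ (-β) * (S k ^ β * S k ^ (-β)) := by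
          rw [h2S]; ring
        rw [hcancel, mul_one] at c2
        have c3 : δ ≤ (1-β) * 2 ^ (-β) := by
          rw [hδdef, hqdef]
          nlinarith [h2b]
        linarith [c1, c2, c3]
      have hstep : S k ^ q + δ ≤ (S k + S k ^ β) ^ q := by
        rw [hqdef]
        linarith [ht, hge]
      rw [hrec k]
      push_cast
      have : S₀ ^ q + δ * (k : ℝ) ≤ S k ^ q := ih
      linarith [hstep]
  -- pointwise comparisons
  have hAm : ∀ m : ℕ, 0 < S₀ ^ q + δ * m := by
    intro m
    have : 0 ≤ δ * (m:ℝ) := by positivity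
    linarith
  have hcomp : ∀ r : ℝ, 0 < r → ∀ m : ℕ,
      S m ^ (-(q * r)) ≤ (S₀ ^ q + δ * m) ^ (-r) := by
    intro r hr m
    have e : S m ^ (-(q * r)) = (S m ^ q) ^ (-r) := by
      rw [← Real.rpow_mul (hSpos m).le, mul_neg]
    rw [e]
    exact Real.rpow_le_rpow_of_nonpos (hAm m) (hkey m) (by linarith)
  -- part (i)
  have t1 : ∀ m : ℕ, S m ^ (-γ) ≤ (S₀ ^ q + δ * m) ^ (-p₁) := by
    intro m
    have := hcomp p₁ (by linarith) m
    rwa [hqp₁] at this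
  have hnn1 : ∀ m : ℕ, (0:ℝ) ≤ S m ^ (-γ) := fun m => Real.rpow_nonneg (hSpos m).le _
  have hnnb1 : ∀ m : ℕ, (0:ℝ) ≤ (S₀ ^ q + δ * m) ^ (-p₁) :=
    fun m => Real.rpow_nonneg (hAm m).le _
  have hpsum1 := fun N => my_partial_sum hp₁ hApos hδ0 N
  have hsumbig1 : Summable (fun m : ℕ => (S₀ ^ q + δ * m) ^ (-p₁)) :=
    summable_of_sum_range_le hnnb1 hpsum1
  have hsum1 : Summable (fun m : ℕ => S m ^ (-γ)) :=
    hsumbig1.of_nonneg_of_le hnn1 t1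
  have htsum1 : ∑' m : ℕ, S m ^ (-γ) ≤ ε / 9 := by
    calc ∑' m : ℕ, S m ^ (-γ) ≤ ∑' m : ℕ, (S₀ ^ q + δ * m) ^ (-p₁) :=
          Summable.tsum_le_tsum t1 hsum1 hsumbig1
      _ ≤ (S₀^q)^(-p₁) + (S₀^q)^(-(p₁-1))/(δ*(p₁-1)) :=
          Summable.tsum_le_of_sum_range_le hsumbig1 hpsum1
      _ ≤ ε / 9 := hE1.le
  -- part (ii)
  have t2 : ∀ m : ℕ, c⁻¹ * Real.exp (-c * (S m ^ β) ^ α)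
      ≤ C₂ * (S₀ ^ q + δ * m) ^ (-p₂) := by
    intro m
    have hXe : (S m ^ β) ^ α = S m ^ (β * α) := (Real.rpow_mul (hSpos m).le β α).symm
    have hX0 : 0 < S m ^ (β * α) := Real.rpow_pos_of_pos (hSpos m) _
    have hfac : (0:ℝ) < (n.factorial : ℝ) := by positivity
    have hcXn : 0 < (c * S m ^ (β * α)) ^ n := by positivity
    have hexp := Real.pow_div_factorial_le_exp (x := c * S m ^ (β * α))
      (hx := mul_nonneg hc.le hX0.le) (n := n)
    have hexp' : Real.exp (-c * (S m ^ β) ^ α) ≤ (n.factorial : ℝ) / (c * S m ^ (β * α)) ^ n := by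
      rw [hXe, show -c * S m ^ (β * α) = -(c * S m ^ (β * α)) by ring, Real.exp_neg]
      have hpos : 0 < (c * S m ^ (β * α)) ^ n / (n.factorial : ℝ) := by positivity
      have h := inv_anti₀ hpos hexp
      rwa [inv_div] at h
    have hXn : ((c * S m ^ (β * α)) ^ n : ℝ) = c ^ n * S m ^ ((β * α) * n) := by
      rw [mul_pow, ← Real.rpow_natCast (S m ^ (β * α)) n, ← Real.rpow_mul (hSpos m).le]
    have hmono2 : S m ^ (-((β * α) * (n:ℝ))) ≤ S m ^ (-(2:ℝ)) :=
      Real.rpow_le_rpow_of_exponent_le (hS1 m) (by nlinarith [hn2])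
    have hcomp2 : S m ^ (-(2:ℝ)) ≤ (S₀ ^ q + δ * m) ^ (-p₂) := by
      have := hcomp p₂ (by linarith) m
      rwa [hqp₂] at this
    have hchain : Real.exp (-c * (S m ^ β) ^ α)
        ≤ (n.factorial : ℝ) / c ^ n * (S₀ ^ q + δ * m) ^ (-p₂) := by
      have e1 : (n.factorial : ℝ) / (c * S m ^ (β * α)) ^ n
          = (n.factorial : ℝ) / c ^ n * S m ^ (-((β * α) * (n:ℝ))) := by
        rw [hXn, Real.rpow_neg (hSpos m).le]
        field_simp
      have e2 : (n.factorial : ℝ) / c ^ n * S m ^ (-((β * α) * (n:ℝ)))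
          ≤ (n.factorial : ℝ) / c ^ n * (S₀ ^ q + δ * m) ^ (-p₂) := by
        apply mul_le_mul_of_nonneg_left (le_trans hmono2 hcomp2) (by positivity)
      calc Real.exp (-c * (S m ^ β) ^ α) ≤ (n.factorial : ℝ) / (c * S m ^ (β * α)) ^ n := hexp'
        _ = (n.factorial : ℝ) / c ^ n * S m ^ (-((β * α) * (n:ℝ))) := e1
        _ ≤ _ := e2
    calc c⁻¹ * Real.exp (-c * (S m ^ β) ^ α)
        ≤ c⁻¹ * ((n.factorial : ℝ) / c ^ n * (S₀ ^ q + δ * m) ^ (-p₂)) := by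
          apply mul_le_mul_of_nonneg_left hchain (by positivity)
      _ = C₂ * (S₀ ^ q + δ * m) ^ (-p₂) := by rw [hC₂def]; ring
  have hnn2 : ∀ m : ℕ, (0:ℝ) ≤ c⁻¹ * Real.exp (-c * (S m ^ β) ^ α) := by
    intro m; positivity
  have hnnb2 : ∀ m : ℕ, (0:ℝ) ≤ C₂ * (S₀ ^ q + δ * m) ^ (-p₂) :=
    fun m => mul_nonneg hC₂0.le (Real.rpow_nonneg (hAm m).le _)
  have hpsum2 : ∀ N, ∑ m ∈ Finset.range N, C₂ * (S₀ ^ q + δ * m) ^ (-p₂)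
      ≤ C₂ * ((S₀^q)^(-p₂) + (S₀^q)^(-(p₂-1))/(δ*(p₂-1))) := by
    intro N
    rw [← Finset.mul_sum]
    exact mul_le_mul_of_nonneg_left (my_partial_sum hp₂ hApos hδ0 N) hC₂0.le
  have hsumbig2 : Summable (fun m : ℕ => C₂ * (S₀ ^ q + δ * m) ^ (-p₂)) :=
    summable_of_sum_range_le hnnb2 hpsum2
  have hsum2 : Summable (fun m : ℕ => c⁻¹ * Real.exp (-c * (S m ^ β) ^ α)) :=
    hsumbig2.of_nonneg_of_le hnn2 t2
  have htsum2 : ∑' m : ℕ, c⁻¹ * Real.exp (-c * (S m ^ β) ^ α) < ε / 2 := by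
    calc ∑' m : ℕ, c⁻¹ * Real.exp (-c * (S m ^ β) ^ α)
        ≤ ∑' m : ℕ, C₂ * (S₀ ^ q + δ * m) ^ (-p₂) := Summable.tsum_le_tsum t2 hsum2 hsumbig2
      _ ≤ C₂ * ((S₀^q)^(-p₂) + (S₀^q)^(-(p₂-1))/(δ*(p₂-1))) :=
          Summable.tsum_le_of_sum_range_le hsumbig2 hpsum2
      _ < ε / 2 := hE2
  refine ⟨⟨hsum1, htsum1⟩, ⟨hsum2, htsum2⟩, ?_⟩
  -- part (iii)
  intro m
  have e : κ * (S m ^ β) / S m = κ * S m ^ (β - 1) := by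
    rw [Real.rpow_sub (hSpos m), Real.rpow_one, mul_div_assoc]
  have hle : S m ^ (β - 1) ≤ S₀ ^ (β - 1) :=
    Real.rpow_le_rpow_of_nonpos hS₀0 (hmono m) (by linarith)
  calc κ * (S m ^ β) / S m = κ * S m ^ (β - 1) := e
    _ ≤ κ * S₀ ^ (β - 1) := mul_le_mul_of_nonneg_left hle (by linarith)
    _ = κ * S₀ ^ (-q) := by rw [hqdef]; ring_nf
    _ < ε / 9 := hE3
end

section
/- There exist constants C > 0 and S* ≥ 1 such that for every real S ≥ S* and every μ ∈ [κ^{−1} + ε, κ − ε], writing T = S^β: T·(g(μ − S^{1−γ}/T) − g(μ)) − (S+T)·(g(μ − S^{1−γ}/(S+T)) − g(μ)) ≥ C·S^{1/3 + 2α}. (This Taylor-expansion estimate shows that the step-initial-condition hydrodynamic profile started at time S gains order S^{1/3+2α} particles over the profile started at time 0, which produces the S^{1/3} third-class particles needed in the proof of the linear-trajectory proposition.) -/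
/-- The Taylor-expansion estimate for the limit shape `g(x) = (√x − √κ)²/(κ−1)`:
with `T = S^β` and `γ = 5/6 − β/2 − α`, for all large `S` and all
`μ ∈ [κ⁻¹ + ε, κ − ε]`,
`T(g(μ − S^{1−γ}/T) − g(μ)) − (S+T)(g(μ − S^{1−γ}/(S+T)) − g(μ)) ≥ C S^{1/3+2α}`. -/
theorem stmt15 (κ ε β α : ℝ) (hκ : 1 < κ) (hε0 : 0 < ε) (hε1 : ε < 1 / 4)
    (hβ1 : 2 / 3 < β) (hβ2 : β < 1) (hα0 : 0 < α) (hα1 : α < β / 2 - 1 / 3) :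
    let g : ℝ → ℝ := fun x => (Real.sqrt x - Real.sqrt κ) ^ 2 / (κ - 1)
    let γ : ℝ := 5 / 6 - β / 2 - α
    ∃ C : ℝ, 0 < C ∧ ∃ Sstar : ℝ, 1 ≤ Sstar ∧
      ∀ S : ℝ, Sstar ≤ S → ∀ μ : ℝ, κ⁻¹ + ε ≤ μ → μ ≤ κ - ε →
        C * S ^ (1 / 3 + 2 * α) ≤
          S ^ β * (g (μ - S ^ (1 - γ) / S ^ β) - g μ) -
            (S + S ^ β) * (g (μ - S ^ (1 - γ) / (S + S ^ β)) - g μ) := by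
  intro g γ
  have hγ : γ = 5 / 6 - β / 2 - α := rfl
  have hκ0 : (0:ℝ) < κ := lt_trans one_pos hκ
  have hκ1 : (0:ℝ) < κ - 1 := sub_pos.mpr hκ
  refine ⟨1/(8*κ*(κ-1)), by positivity, max 1 ((2/ε)^6), le_max_left _ _, ?_⟩
  intro S hS μ hμ1 hμ2
  have hS1 : (1:ℝ) ≤ S := le_trans (le_max_left _ _) hS
  have hS0 : (0:ℝ) < S := lt_of_lt_of_le one_pos hS1
  set T := S ^ β with hTdef
  set a := S ^ (1-γ) with hadef
  have hT0 : 0 < T := Real.rpow_pos_of_pos hS0 β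
  have ha0 : 0 < a := Real.rpow_pos_of_pos hS0 _
  have hU0 : 0 < S + T := by positivity
  have hTS : T ≤ S := by
    calc T = S ^ β := rfl
    _ ≤ S ^ (1:ℝ) := Real.rpow_le_rpow_of_exponent_le hS1 hβ2.le
    _ = S := Real.rpow_one S
  -- a/T ≤ ε/2
  have h7 : (2/ε) ≤ S ^ ((1:ℝ)/6) := by
    have hSstar : (2/ε)^6 ≤ S := le_trans (le_max_right _ _) hS
    have h := Real.rpow_le_rpow (by positivity) hSstar (by norm_num : (0:ℝ) ≤ 1/6)
    rwa [← Real.rpow_natCast (2/ε) 6, ← Real.rpow_mul (by positivity : (0:ℝ) ≤ 2/ε),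
      (by norm_num : ((6:ℕ):ℝ) * (1/6) = 1), Real.rpow_one] at h
  have haT : a / T ≤ ε/2 := by
    have h4 : a / T = S ^ ((1-γ) - β) := (Real.rpow_sub hS0 _ _).symm
    have he : (1-γ) - β ≤ -((1:ℝ)/6) := by rw [hγ]; linarith
    have h5 : S ^ ((1-γ)-β) ≤ S ^ (-((1:ℝ)/6)) := Real.rpow_le_rpow_of_exponent_le hS1 he
    have h6 : S ^ (-((1:ℝ)/6)) = 1 / S ^ ((1:ℝ)/6) := by
      rw [Real.rpow_neg hS0.le]; exact inv_eq_one_div _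
    have h8 : 1 / S ^ ((1:ℝ)/6) ≤ 1/(2/ε) := by
      apply one_div_le_one_div_of_le (by positivity) h7
    have h9 : (1:ℝ)/(2/ε) = ε/2 := by rw [one_div_div]
    calc a / T = S ^ ((1-γ)-β) := h4
    _ ≤ S ^ (-((1:ℝ)/6)) := h5
    _ = 1 / S ^ ((1:ℝ)/6) := h6
    _ ≤ ε/2 := h9 ▸ h8
  have hκinv : (0:ℝ) < κ⁻¹ := inv_pos.mpr hκ0
  set x := μ - a / T with hxdef
  set y := μ - a / (S + T) with hydef
  have hμ0 : 0 < μ := by linarith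
  have hμκ : μ ≤ κ := by linarith
  have hx0 : 0 < x := by
    have : 0 < a / T := by positivity
    simp only [hxdef]; linarith
  have hxy : x ≤ y := by
    have : a / (S+T) ≤ a / T := by gcongr; linarith
    simp only [hxdef, hydef]; linarith
  have hy0 : 0 < y := lt_of_lt_of_le hx0 hxy
  have hyμ : y ≤ μ := by
    have : 0 < a / (S+T) := by positivity
    simp only [hydef]; linarith
  have hxμ : x ≤ μ := le_trans hxy hyμ
  set sx := Real.sqrt x with hsxdef
  set sy := Real.sqrt y with hsydef
  set sm := Real.sqrt μ with hsmdef
  set sk := Real.sqrt κ with hskdef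
  have hsx2 : sx^2 = x := Real.sq_sqrt hx0.le
  have hsy2 : sy^2 = y := Real.sq_sqrt hy0.le
  have hsm2 : sm^2 = μ := Real.sq_sqrt hμ0.le
  have hsk2 : sk^2 = κ := Real.sq_sqrt hκ0.le
  have hsx0 : 0 < sx := Real.sqrt_pos.mpr hx0
  have hsy0 : 0 < sy := Real.sqrt_pos.mpr hy0
  have hsm0 : 0 < sm := Real.sqrt_pos.mpr hμ0
  have hsk0 : 0 < sk := Real.sqrt_pos.mpr hκ0
  have hsmk : sm ≤ sk := Real.sqrt_le_sqrt hμκ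
  have hsxk : sx ≤ sk := Real.sqrt_le_sqrt (le_trans hxμ hμκ)
  have hsyk : sy ≤ sk := Real.sqrt_le_sqrt (le_trans hyμ hμκ)
  have hTx : T * x = T * μ - a := by
    rw [hxdef]; field_simp
  have hUy : (S+T) * y = (S+T) * μ - a := by
    rw [hydef]; field_simp
  have hpx : 0 < sm + sx := by linarith
  have hpy : 0 < sm + sy := by linarith
  have hpr : 0 < sx + sy := by linarith
  clear_value T a x y sx sy sm sk
  have h1 : T * (sm - sx) = a / (sm + sx) := by
    rw [eq_div_iff hpx.ne']
    linear_combination T*hsm2 - T*hsx2 - hTx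
  have h2 : (S+T) * (sm - sy) = a / (sm + sy) := by
    rw [eq_div_iff hpy.ne']
    linear_combination (S+T)*hsm2 - (S+T)*hsy2 - hUy
  have h3 : sy - sx = a * S / (T * (S+T) * (sx + sy)) := by
    rw [eq_div_iff (by positivity)]
    linear_combination T*(S+T)*hsy2 - T*(S+T)*hsx2 + T*hUy - (S+T)*hTx
  have hfrac : a / (sm+sx) - a / (sm+sy) = a * (sy - sx) / ((sm+sx)*(sm+sy)) := by
    field_simp
    ring
  have hD : T * (sm - sx) - (S+T) * (sm - sy)
      = a * (sy - sx) / ((sm+sx)*(sm+sy)) := by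
    rw [h1, h2, hfrac]
  -- key identity
  have key : T * (g x - g μ) - (S+T) * (g y - g μ)
      = 2*sk*(T*(sm - sx) - (S+T)*(sm - sy)) / (κ-1) := by
    simp only [g]
    rw [← hsxdef, ← hsydef, ← hsmdef, ← hskdef]
    field_simp
    linear_combination T*hsx2 - T*hsm2 - (S+T)*hsy2 + (S+T)*hsm2 + hTx - hUy
  -- lower bounds
  have hsyx : a * S / (T * (S+T) * (2*sk)) ≤ sy - sx := by
    rw [h3]
    refine div_le_div₀ (by positivity) le_rfl (by positivity) ?_
    have h := mul_le_mul_of_nonneg_left (show sx+sy ≤ 2*sk by linarith) (mul_pos hT0 hU0).le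
    calc T * (S+T) * (sx+sy) = T * (S+T) * (sx+sy) := rfl
    _ ≤ T * (S+T) * (2*sk) := h
  have hnum : a * (a * S / (T * (S+T) * (2*sk))) ≤ a * (sy - sx) :=
    mul_le_mul_of_nonneg_left hsyx ha0.le
  have hprod : (sm+sx)*(sm+sy) ≤ 4*κ := by
    have hb1 : sm + sx ≤ 2*sk := by linarith
    have hb2 : sm + sy ≤ 2*sk := by linarith
    have hb3 := mul_le_mul hb1 hb2 (by linarith) (by positivity)
    have hb4 : 2*sk*(2*sk) = 4*κ := by rw [← hsk2]; ring
    linarith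
  have hDlow : a * (a * S / (T * (S+T) * (2*sk))) / (4*κ) ≤ a * (sy - sx) / ((sm+sx)*(sm+sy)) :=
    div_le_div₀ (le_trans (by positivity) hnum) hnum (by positivity) hprod
  -- combine
  have haaT : a * a / T = S ^ ((1:ℝ)/3 + 2*α) := by
    rw [hadef, hTdef, ← Real.rpow_add hS0, ← Real.rpow_sub hS0]
    congr 1
    rw [hγ]; ring
  have heq1 : 2*sk*(a * (a * S / (T * (S+T) * (2*sk))) / (4*κ)) / (κ-1)
      = a*a*S/(4*κ*(κ-1)*(T*(S+T))) := by
    field_simp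
  have heq2 : 1/(8*κ*(κ-1)) * (a*a/T) = a*a*S/(4*κ*(κ-1)*(T*(2*S))) := by
    field_simp
    ring
  have hmono : a*a*S/(4*κ*(κ-1)*(T*(2*S))) ≤ a*a*S/(4*κ*(κ-1)*(T*(S+T))) := by
    refine div_le_div₀ (by positivity) le_rfl (by positivity) ?_
    have h := mul_le_mul_of_nonneg_left (show T*(S+T) ≤ T*(2*S) from
      mul_le_mul_of_nonneg_left (by linarith) hT0.le) (by positivity : (0:ℝ) ≤ 4*κ*(κ-1))
    exact h
  calc 1/(8*κ*(κ-1)) * S ^ ((1:ℝ)/3 + 2*α)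
      = a*a*S/(4*κ*(κ-1)*(T*(2*S))) := by rw [← haaT]; exact heq2
    _ ≤ a*a*S/(4*κ*(κ-1)*(T*(S+T))) := hmono
    _ = 2*sk*(a * (a * S / (T * (S+T) * (2*sk))) / (4*κ)) / (κ-1) := heq1.symm
    _ ≤ 2*sk*(a * (sy - sx) / ((sm+sx)*(sm+sy))) / (κ-1) :=
        (div_le_div_iff_of_pos_right hκ1).mpr (mul_le_mul_of_nonneg_left hDlow (by positivity))

    _ = 2*sk*(T*(sm - sx) - (S+T)*(sm - sy)) / (κ-1) := by rw [hD]
    _ = T * (g x - g μ) - (S+T) * (g y - g μ) := key.symm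
end
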